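/- arXiv:2211.04676 — 2 statements merged into one kernel-verified Lean document; each statement's English description precedes it below -/
import Mathlib

section
/- Under the same setting, for each i = 1,…,k: sin∠_i(U_k, Û_l) ≤ σ₁((I_m − Û_l Û_l*) A) / σ_i. -/
/-!
Write `U_k = A B` with `B = V Σ⁺`, where `Σ⁺` inverts the leading `k` singular values.
On the `i`-dimensional space of vectors supported on the first `i` coordinates `‖B x‖ ≤ ‖x‖ / σ_i`,
hence `‖P U_k x‖ = ‖P A (B x)‖ ≤ σ₁(P A) ‖x‖ / σ_i` for `P = I − Û Û*`. By the Courant–Fischer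
min-max principle the `i`-th smallest singular value `σ_{k-i+1}(P U_k)` is then at most
`σ₁(P A) / σ_i`.
-/

open Matrix

noncomputable def eigval {n : Type} [Fintype n] [DecidableEq n] {M : Matrix n n ℂ}
    (hM : M.IsHermitian) (j : ℕ) : ℝ :=
  ((Multiset.map hM.eigenvalues Finset.univ.val).sort (· ≤ ·)).getD (Fintype.card n - j) 0

noncomputable def singval {m n : Type} [Fintype m] [Fintype n] [DecidableEq n]
    (M : Matrix m n ℂ) (j : ℕ) : ℝ :=
  Real.sqrt (eigval (Matrix.isHermitian_conjTranspose_mul_self M) j)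

theorem finrank_comap_spanSubset_Iic {K V : Type*} [Field K] [AddCommGroup V] [Module K V]
    {n : ℕ} (e : V ≃ₗ[K] (Fin n → K)) (p : Fin n) :
    Module.finrank K ((Pi.spanSubset K (Set.Iic p)).comap (e : V →ₗ[K] Fin n → K)) = p + 1 := by
  rw [Submodule.comap_equiv_eq_map_symm, LinearEquiv.finrank_map_eq, Pi.dim_spanSubset,
    Set.ncard_eq_toFinset_card', Set.toFinset_Iic, Fin.card_Iic]

namespace LinearMap.IsSymmetric

variable {𝕜 E : Type*} [RCLike 𝕜] [NormedAddCommGroup E] [InnerProductSpace 𝕜 E]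
  [FiniteDimensional 𝕜 E] {T : E →ₗ[𝕜] E} (hT : T.IsSymmetric) {n : ℕ}
  (hn : Module.finrank 𝕜 E = n)

theorem re_inner_apply_self_eq_sum (x : E) :
    RCLike.re (inner 𝕜 (T x) x) =
      ∑ j, hT.eigenvalues hn j * ‖(hT.eigenvectorBasis hn).repr x j‖ ^ 2 := by
  set b := hT.eigenvectorBasis hn
  rw [← b.repr.inner_map_map, PiLp.inner_apply, map_sum]
  refine Finset.sum_congr rfl fun j _ => ?_
  rw [hT.eigenvectorBasis_apply_self_apply hn, ← smul_eq_mul, inner_smul_left, RCLike.conj_ofReal,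
    inner_self_eq_norm_sq_to_K, ← RCLike.ofReal_pow, ← RCLike.ofReal_mul, RCLike.ofReal_re]

theorem norm_sq_eq_sum_repr (x : E) :
    ‖x‖ ^ 2 = ∑ j, ‖(hT.eigenvectorBasis hn).repr x j‖ ^ 2 := by
  rw [← (hT.eigenvectorBasis hn).repr.norm_map, EuclideanSpace.norm_sq_eq]

theorem re_inner_apply_self_le {c : ℝ} (h : ∀ j, hT.eigenvalues hn j ≤ c) (x : E) :
    RCLike.re (inner 𝕜 (T x) x) ≤ c * ‖x‖ ^ 2 := by
  rw [hT.re_inner_apply_self_eq_sum hn, hT.norm_sq_eq_sum_repr hn, Finset.mul_sum]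
  exact Finset.sum_le_sum fun j _ => by gcongr; exact h j

theorem le_re_inner_apply_self {c : ℝ} {x : E}
    (h : ∀ j, (hT.eigenvectorBasis hn).repr x j ≠ 0 → c ≤ hT.eigenvalues hn j) :
    c * ‖x‖ ^ 2 ≤ RCLike.re (inner 𝕜 (T x) x) := by
  rw [hT.re_inner_apply_self_eq_sum hn, hT.norm_sq_eq_sum_repr hn, Finset.mul_sum]
  refine Finset.sum_le_sum fun j _ => ?_
  by_cases hj : (hT.eigenvectorBasis hn).repr x j = 0
  · simp [hj]
  · gcongr; exact h j hj

/-- One half of the Courant–Fischer min-max principle. -/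
theorem eigenvalues_le_of_forall_mem (S : Submodule 𝕜 E) (p : Fin n)
    (hS : n ≤ Module.finrank 𝕜 S + p) {c : ℝ}
    (h : ∀ x ∈ S, RCLike.re (inner 𝕜 (T x) x) ≤ c * ‖x‖ ^ 2) :
    hT.eigenvalues hn p ≤ c := by
  set b := (hT.eigenvectorBasis hn).toBasis
  set W : Submodule 𝕜 E := (Pi.spanSubset 𝕜 (Set.Iic p)).comap (b.equivFun : E →ₗ[𝕜] Fin n → 𝕜)
  have hW : Module.finrank 𝕜 W = p + 1 := finrank_comap_spanSubset_Iic b.equivFun p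
  have hSW : S ⊓ W ≠ ⊥ := by
    intro hbot
    have := Submodule.finrank_sup_add_finrank_inf_eq S W
    rw [hbot, finrank_bot] at this
    have := Submodule.finrank_le (S ⊔ W)
    omega
  obtain ⟨x, ⟨hxS, hxW⟩, hx0⟩ := Submodule.exists_mem_ne_zero_of_ne_bot hSW
  have hlow : hT.eigenvalues hn p * ‖x‖ ^ 2 ≤ RCLike.re (inner 𝕜 (T x) x) := by
    refine hT.le_re_inner_apply_self hn fun j hj => hT.eigenvalues_antitone hn ?_
    by_contra hjp
    refine hj ?_
    simpa [b, OrthonormalBasis.coe_toBasis_repr_apply] using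
      Pi.mem_spanSubset_iff.mp hxW j (by simpa using hjp)
  have hx : 0 < ‖x‖ ^ 2 := by positivity
  exact le_of_mul_le_mul_right (hlow.trans (h x hxS)) hx

end LinearMap.IsSymmetric

section EuclideanNorm

variable {𝕜 : Type*} [RCLike 𝕜] {m n : Type*} [Fintype m] [Fintype n] [DecidableEq n]

theorem Matrix.re_inner_toEuclideanLin_conjTranspose_mul_self (M : Matrix m n 𝕜)
    (x : EuclideanSpace 𝕜 n) :
    RCLike.re (inner 𝕜 ((Mᴴ * M).toEuclideanLin x) x) = ‖M.toEuclideanLin x‖ ^ 2 := by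
  classical
  rw [Matrix.toLpLin_mul 2 2 2, LinearMap.comp_apply,
    Matrix.toEuclideanLin_conjTranspose_eq_adjoint, LinearMap.adjoint_inner_left,
    inner_self_eq_norm_sq]

theorem Matrix.norm_toEuclideanLin_of_conjTranspose_mul_self_eq_one {M : Matrix m n 𝕜}
    (hM : Mᴴ * M = 1) (x : EuclideanSpace 𝕜 n) : ‖M.toEuclideanLin x‖ = ‖x‖ := by
  have := M.re_inner_toEuclideanLin_conjTranspose_mul_self x
  rw [hM, Matrix.toLpLin_one, LinearMap.id_apply, inner_self_eq_norm_sq] at this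
  exact (pow_left_inj₀ (norm_nonneg _) (norm_nonneg _) two_ne_zero).mp this.symm

theorem EuclideanSpace.norm_le_of_forall_norm_apply_le {ι : Type*} [Fintype ι]
    {x y : EuclideanSpace 𝕜 ι} {c : ℝ} (hc : 0 ≤ c) (h : ∀ j, ‖y j‖ ≤ c * ‖x j‖) :
    ‖y‖ ≤ c * ‖x‖ := by
  refine le_of_sq_le_sq ?_ (by positivity)
  rw [mul_pow, EuclideanSpace.norm_sq_eq, EuclideanSpace.norm_sq_eq, Finset.mul_sum]
  exact Finset.sum_le_sum fun j _ => by rw [← mul_pow]; gcongr; exact h j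

end EuclideanNorm

section Singval

theorem eigval_eq_eigenvalues₀ {n : Type} [Fintype n] [DecidableEq n] {M : Matrix n n ℂ}
    (hM : M.IsHermitian) {j : ℕ} (hj : j < Fintype.card n) :
    eigval hM (j + 1) = hM.eigenvalues₀ ⟨j, hj⟩ := by
  have hsort : (Multiset.map hM.eigenvalues Finset.univ.val).sort (· ≤ ·)
      = (List.ofFn hM.eigenvalues₀).reverse := by
    have hmap : Multiset.map hM.eigenvalues Finset.univ.val
        = ↑(List.ofFn hM.eigenvalues₀).reverse := by
      rw [show hM.eigenvalues = hM.eigenvalues₀ ∘ _ from rfl, ← Multiset.map_map,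
        Multiset.map_univ_val_equiv, Fin.univ_val_map, Multiset.coe_reverse]
    rw [hmap, Multiset.coe_sort]
    refine List.mergeSort_of_pairwise ?_
    simpa [List.pairwise_reverse] using (hM.eigenvalues₀_antitone).sortedGE_ofFn.pairwise
  unfold eigval
  rw [hsort, List.getD_eq_getElem _ _ (by simp; omega), List.getElem_reverse, List.getElem_ofFn]
  congr 2
  simp only [List.length_ofFn]
  omega

variable {m n : Type} [Fintype m] [Fintype n] [DecidableEq n]

theorem singval_le_of_forall_mem (M : Matrix m n ℂ) {j : ℕ} (hj : j < Fintype.card n)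
    (S : Submodule ℂ (EuclideanSpace ℂ n)) (hS : Fintype.card n ≤ Module.finrank ℂ S + j)
    {c : ℝ} (hc : 0 ≤ c) (h : ∀ x ∈ S, ‖M.toEuclideanLin x‖ ≤ c * ‖x‖) :
    singval M (j + 1) ≤ c := by
  have hH := isSymmetric_toEuclideanLin_iff.mpr (isHermitian_conjTranspose_mul_self M)
  have heig : (isHermitian_conjTranspose_mul_self M).eigenvalues₀ ⟨j, hj⟩ ≤ c ^ 2 := by
    refine hH.eigenvalues_le_of_forall_mem finrank_euclideanSpace S ⟨j, hj⟩ hS fun x hx => ?_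
    rw [M.re_inner_toEuclideanLin_conjTranspose_mul_self, ← mul_pow]
    gcongr
    exact h x hx
  rw [singval, eigval_eq_eigenvalues₀ _ hj]
  exact Real.sqrt_le_left hc |>.mpr heig

theorem norm_toEuclideanLin_le_singval_one (M : Matrix m n ℂ) (x : EuclideanSpace ℂ n) :
    ‖M.toEuclideanLin x‖ ≤ singval M 1 * ‖x‖ := by
  rcases isEmpty_or_nonempty n with _ | _
  · simp [Subsingleton.elim x 0]
  have h0 : 0 < Fintype.card n := Fintype.card_pos
  have hH := isSymmetric_toEuclideanLin_iff.mpr (isHermitian_conjTranspose_mul_self M)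
  have hsq : ‖M.toEuclideanLin x‖ ^ 2
      ≤ (isHermitian_conjTranspose_mul_self M).eigenvalues₀ ⟨0, h0⟩ * ‖x‖ ^ 2 := by
    rw [← M.re_inner_toEuclideanLin_conjTranspose_mul_self]
    refine hH.re_inner_apply_self_le finrank_euclideanSpace (fun j => ?_) x
    exact hH.eigenvalues_antitone finrank_euclideanSpace (Fin.mk_le_of_le_val (Nat.zero_le _))
  rw [singval, eigval_eq_eigenvalues₀ _ h0, ← Real.sqrt_sq (norm_nonneg x), ← Real.sqrt_mul',
    ← Real.sqrt_sq (norm_nonneg (M.toEuclideanLin x))]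
  · exact Real.sqrt_le_sqrt hsq
  · positivity

end Singval

def rectDiag {R : Type*} [Zero R] (m n : ℕ) (d : ℕ → R) : Matrix (Fin m) (Fin n) R :=
  Matrix.of fun i j => if (i : ℕ) = j then d i else 0

section RectDiag

variable {R : Type*}

theorem rectDiag_congr [Zero R] {m n : ℕ} {d e : ℕ → R} (h : ∀ j < n, d j = e j) :
    rectDiag m n d = rectDiag m n e := by
  ext a b
  simp only [rectDiag, of_apply]
  split_ifs with hab
  · exact h a (hab ▸ b.2)
  · rfl

theorem rectDiag_eq_diagonal [Zero R] (n : ℕ) (d : ℕ → R) :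
    rectDiag n n d = diagonal fun j : Fin n => d j := by
  ext a b
  simp [rectDiag, diagonal_apply, Fin.val_eq_val]

theorem rectDiag_one_eq_submatrix [Zero R] [One R] {m n : ℕ} (h : n ≤ m) :
    rectDiag m n (1 : ℕ → R) = (1 : Matrix (Fin m) (Fin m) R).submatrix id (Fin.castLE h) := by
  ext a b
  simp [rectDiag, one_apply, Fin.ext_iff]

theorem conjTranspose_rectDiag [AddMonoid R] [StarAddMonoid R] (m n : ℕ) (d : ℕ → R) :
    (rectDiag m n d)ᴴ = rectDiag n m (star d) := by
  ext a b
  simp only [conjTranspose_apply, rectDiag, of_apply, Pi.star_apply, eq_comm (a := (b : ℕ))]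
  split_ifs with hab
  · rw [hab]
  · exact star_zero R

theorem rectDiag_mul_rectDiag [NonUnitalNonAssocSemiring R] {l m n : ℕ} (h : n ≤ m)
    (d e : ℕ → R) : rectDiag l m d * rectDiag m n e = rectDiag l n (d * e) := by
  ext a c
  simp only [mul_apply, rectDiag, of_apply, Pi.mul_apply]
  by_cases hac : (a : ℕ) = c
  · rw [Finset.sum_eq_single ⟨c, by omega⟩ (fun b _ hb => ?_) (by simp)]
    · simp [hac]
    · have hbc : (b : ℕ) ≠ c := fun hbc => hb (Fin.ext hbc)
      simp [hbc]
  · rw [if_neg hac]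
    refine Finset.sum_eq_zero fun b _ => ?_
    split_ifs <;> first | simp | omega

end RectDiag

theorem submatrix_castLE_eq_mul_rectDiag_inv {K : Type*} [Field K] [StarRing K] {l : Type*}
    {m n k : ℕ} (hkm : k ≤ m) (hkn : k ≤ n) (U : Matrix l (Fin m) K)
    (V : Matrix (Fin n) (Fin n) K) (s : ℕ → K) (hV : Vᴴ * V = 1) (hs : ∀ j < k, s j ≠ 0) :
    U.submatrix id (Fin.castLE hkm) = U * rectDiag m n s * Vᴴ * (V * rectDiag n k s⁻¹) := by
  have hss : rectDiag m k (s * s⁻¹) = rectDiag m k 1 :=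
    rectDiag_congr fun j hj => mul_inv_cancel₀ (hs j hj)
  rw [Matrix.mul_assoc, ← Matrix.mul_assoc Vᴴ, hV, Matrix.one_mul, Matrix.mul_assoc,
    rectDiag_mul_rectDiag hkn, hss, rectDiag_one_eq_submatrix hkm]
  exact (mul_submatrix_one (Equiv.refl _) _ U).symm

theorem norm_toEuclideanLin_rectDiag_le {𝕜 : Type*} [RCLike 𝕜] {n k : ℕ} (hkn : k ≤ n)
    (d : ℕ → 𝕜) {c : ℝ} (hc : 0 ≤ c) {x : EuclideanSpace 𝕜 (Fin k)}
    (h : ∀ j : Fin k, ‖d j‖ * ‖x j‖ ≤ c * ‖x j‖) :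
    ‖(rectDiag n k d).toEuclideanLin x‖ ≤ c * ‖x‖ := by
  have hsplit : rectDiag n k d = rectDiag n k (1 : ℕ → 𝕜) * rectDiag k k d := by
    rw [rectDiag_mul_rectDiag le_rfl, one_mul]
  have hiso : (rectDiag n k (1 : ℕ → 𝕜))ᴴ * rectDiag n k (1 : ℕ → 𝕜) = 1 := by
    rw [conjTranspose_rectDiag, star_one, rectDiag_mul_rectDiag hkn, one_mul,
      rectDiag_eq_diagonal, Pi.one_def, diagonal_one]
  rw [hsplit, toLpLin_mul 2 2 2, LinearMap.comp_apply,
    norm_toEuclideanLin_of_conjTranspose_mul_self_eq_one hiso]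
  refine EuclideanSpace.norm_le_of_forall_norm_apply_le hc fun j => ?_
  simpa [rectDiag_eq_diagonal, toLpLin_apply, mulVec_diagonal] using h j

theorem norm_toEuclideanLin_rectDiag_inv_le {n k i : ℕ} (hkn : k ≤ n) {σ : ℕ → ℝ}
    (hσi : 0 < σ i) (hσ : ∀ j < i, σ i ≤ σ (j + 1)) {x : EuclideanSpace ℂ (Fin k)}
    (hx : ∀ j : Fin k, i ≤ (j : ℕ) → x j = 0) :
    ‖(rectDiag n k (fun j => (σ (j + 1) : ℂ))⁻¹).toEuclideanLin x‖ ≤ (σ i)⁻¹ * ‖x‖ := by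
  refine norm_toEuclideanLin_rectDiag_le hkn _ (by positivity) fun j => ?_
  by_cases hj : (j : ℕ) < i
  · have hσj := hσ j hj
    simp only [Pi.inv_apply, norm_inv, Complex.norm_real, Real.norm_eq_abs,
      abs_of_pos (hσi.trans_le hσj)]
    gcongr
  · simp [hx j (not_lt.mp hj)]

theorem residual_bound_left_second_term_general
    {m n k l : ℕ} (hkm : k ≤ m) (hkn : k ≤ n)
    (A : Matrix (Fin m) (Fin n) ℂ)
    (U : Matrix (Fin m) (Fin m) ℂ) (V : Matrix (Fin n) (Fin n) ℂ) (σ : ℕ → ℝ)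
    (hV : V ∈ Matrix.unitaryGroup (Fin n) ℂ)
    (hσdec : ∀ i j : ℕ, 1 ≤ i → i ≤ j → σ j ≤ σ i)
    (hσk : 0 < σ k)
    (hA : A = U * (Matrix.of fun (i : Fin m) (j : Fin n) =>
      if (i : ℕ) = (j : ℕ) then (σ ((i : ℕ) + 1) : ℂ) else 0) * Vᴴ)
    (hatU : Matrix (Fin m) (Fin l) ℂ) :
    ∀ i : ℕ, 1 ≤ i → i ≤ k →
      singval ((1 - hatU * hatUᴴ) * U.submatrix id (Fin.castLE hkm)) (k - i + 1)
        ≤ singval ((1 - hatU * hatUᴴ) * A) 1 / σ i := by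
  intro i hi hik
  have hσpos : ∀ j < k, 0 < σ (j + 1) := fun j hj => hσk.trans_le (hσdec _ _ (by omega) (by omega))
  have hσi : 0 < σ i := hσk.trans_le (hσdec i k hi hik)
  set B : Matrix (Fin n) (Fin k) ℂ := V * rectDiag n k (fun j => (σ (j + 1) : ℂ))⁻¹
  have hUk : U.submatrix id (Fin.castLE hkm) = A * B :=
    hA ▸ submatrix_castLE_eq_mul_rectDiag_inv hkm hkn U V (fun j => (σ (j + 1) : ℂ))
      (mem_unitaryGroup_iff'.mp hV)
      fun j hj => Complex.ofReal_ne_zero.mpr (hσpos j hj).ne'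
  set S : Submodule ℂ (EuclideanSpace ℂ (Fin k)) :=
    (Pi.spanSubset ℂ (Set.Iic ⟨i - 1, by omega⟩)).comap
      (WithLp.linearEquiv 2 ℂ (Fin k → ℂ) : EuclideanSpace ℂ (Fin k) →ₗ[ℂ] Fin k → ℂ)
  have hS : Module.finrank ℂ S = i :=
    (finrank_comap_spanSubset_Iic _ _).trans (Nat.sub_add_cancel hi)
  refine singval_le_of_forall_mem _ (by simp; omega) S (by simp; omega)
    (div_nonneg (Real.sqrt_nonneg _) hσi.le) fun x hx => ?_
  have hBx : ‖B.toEuclideanLin x‖ ≤ (σ i)⁻¹ * ‖x‖ := by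
    rw [toLpLin_mul 2 2 2, LinearMap.comp_apply,
      norm_toEuclideanLin_of_conjTranspose_mul_self_eq_one (mem_unitaryGroup_iff'.mp hV)]
    exact norm_toEuclideanLin_rectDiag_inv_le hkn hσi
      (fun j hj => hσdec _ _ (by omega) (by omega))
      fun j hj => Pi.mem_spanSubset_iff.mp hx j (by simp [Fin.le_def]; omega)
  calc ‖((1 - hatU * hatUᴴ) * U.submatrix id (Fin.castLE hkm)).toEuclideanLin x‖
      = ‖((1 - hatU * hatUᴴ) * A).toEuclideanLin (B.toEuclideanLin x)‖ := by
        rw [hUk, ← Matrix.mul_assoc, toLpLin_mul 2 2 2, LinearMap.comp_apply]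
    _ ≤ singval ((1 - hatU * hatUᴴ) * A) 1 * ((σ i)⁻¹ * ‖x‖) :=
        (norm_toEuclideanLin_le_singval_one _ _).trans
          (mul_le_mul_of_nonneg_left hBx (Real.sqrt_nonneg _))
    _ = singval ((1 - hatU * hatUᴴ) * A) 1 / σ i * ‖x‖ := by ring

/-- For each i = 1,…,k, sin∠ᵢ(U_k, Û_l) ≤ σ₁((I − Û_l Û_l*) A) / σᵢ. -/
theorem residual_bound_left_second_term
    {m n k l : ℕ} (hkm : k ≤ m) (hkn : k ≤ n)
    (A : Matrix (Fin m) (Fin n) ℂ)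
    (U : Matrix (Fin m) (Fin m) ℂ) (V : Matrix (Fin n) (Fin n) ℂ) (σ : ℕ → ℝ)
    (hU : U ∈ Matrix.unitaryGroup (Fin m) ℂ) (hV : V ∈ Matrix.unitaryGroup (Fin n) ℂ)
    (hσdec : ∀ i j : ℕ, 1 ≤ i → i ≤ j → σ j ≤ σ i) (hσnn : ∀ j, 0 ≤ σ j)
    (hσk : 0 < σ k)
    (hA : A = U * (Matrix.of fun (i : Fin m) (j : Fin n) =>
      if (i : ℕ) = (j : ℕ) then (σ ((i : ℕ) + 1) : ℂ) else 0) * Vᴴ)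
    (hatU : Matrix (Fin m) (Fin l) ℂ)
    (horth : hatUᴴ * hatU = 1)
    (hrange : ∃ B : Matrix (Fin n) (Fin l) ℂ, hatU = A * B) :
    ∀ i : ℕ, 1 ≤ i → i ≤ k →
      singval ((1 - hatU * hatUᴴ) * U.submatrix id (Fin.castLE hkm)) (k - i + 1)
        ≤ singval ((1 - hatU * hatUᴴ) * A) 1 / σ i :=
  residual_bound_left_second_term_general hkm hkn A U V σ hV hσdec hσk hA hatU
end

section
/- Residual-based bound on the canonical angles between exact and approximate rank-l right singular subspaces: in the block setting below, every unitarily invariant norm satisfies ⦀Ṽ₃₁⦀ ≤ (‖E₃₃‖₂/σ_k)·⦀Ũ₃₁⦀; consequently, if ⦀Ũ₃₁⦀ ≤ ⦀[E₃₁,E₃₂]⦀/Γ₁ with Γ₁ = (σ_k² − ‖E₃₃‖₂²)/σ_k, then ⦀Ṽ₃₁⦀ ≤ ⦀[E₃₁,E₃₂]⦀/Γ₂ where Γ₂ = (σ_k² − ‖E₃₃‖₂²)/‖E₃₃‖₂. -/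
open Matrix

/-- A family of unitarily invariant matrix norms (one for every shape). -/
structure UINorm where
  N : ∀ {p q : Type} [Fintype p] [Fintype q] [DecidableEq p] [DecidableEq q],
      Matrix p q ℂ → ℝ
  nonneg : ∀ {p q : Type} [Fintype p] [Fintype q] [DecidableEq p] [DecidableEq q]
      (M : Matrix p q ℂ), 0 ≤ N M
  triangle : ∀ {p q : Type} [Fintype p] [Fintype q] [DecidableEq p] [DecidableEq q]
      (M₁ M₂ : Matrix p q ℂ), N (M₁ + M₂) ≤ N M₁ + N M₂
  unitary_invariant : ∀ {p q : Type} [Fintype p] [Fintype q] [DecidableEq p] [DecidableEq q]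
      (U : Matrix p p ℂ) (M : Matrix p q ℂ) (V : Matrix q q ℂ),
      U ∈ Matrix.unitaryGroup p ℂ → V ∈ Matrix.unitaryGroup q ℂ → N (U * M * V) = N M
  spec_mul : ∀ {p q r : Type} [Fintype p] [Fintype q] [Fintype r]
      [DecidableEq p] [DecidableEq q] [DecidableEq r]
      (X : Matrix p q ℂ) (Y : Matrix q r ℂ), N (X * Y) ≤ singval X 1 * N Y
  mul_spec : ∀ {p q r : Type} [Fintype p] [Fintype q] [Fintype r]
      [DecidableEq p] [DecidableEq q] [DecidableEq r]
      (X : Matrix p q ℂ) (Y : Matrix q r ℂ), N (X * Y) ≤ N X * singval Y 1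

/-!
Taking conjugate transposes in `Ũ₃₁ᴴ E₃₃ = Σ_k Ṽ₃₁ᴴ` gives `Ṽ₃₁ = E₃₃ᴴ Ũ₃₁ Σ_k⁻¹`, so the two
spectral-norm inequalities of a unitarily invariant norm yield
`⦀Ṽ₃₁⦀ ≤ ‖E₃₃ᴴ‖₂ ⦀Ũ₃₁⦀ ‖Σ_k⁻¹‖₂ ≤ (‖E₃₃‖₂ / σ_k) ⦀Ũ₃₁⦀`.
The second bound is the first one multiplied out: `(‖E₃₃‖₂ / σ_k) / Γ₁ = 1 / Γ₂`.
The largest singular value `singval M 1` is identified with the ℓ²-operator norm of `M` through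
the spectral theorem for `Mᴴ M`; this gives `‖E₃₃ᴴ‖₂ = ‖E₃₃‖₂` and, the σ's being decreasing,
`‖Σ_k⁻¹‖₂ ≤ σ_k⁻¹`.
-/

theorem List.getD_length_sub_one_eq_getLast {α : Type*} (l : List α) (h : l ≠ []) (d : α) :
    l.getD (l.length - 1) d = l.getLast h := by
  rw [List.getLast_eq_getElem, List.getD_eq_getElem]

theorem eigval_one_eq_norm_eigenvalues {n : Type} [Fintype n] [DecidableEq n] {M : Matrix n n ℂ}
    (hM : M.IsHermitian) (hnonneg : ∀ i, 0 ≤ hM.eigenvalues i) :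
    eigval hM 1 = ‖hM.eigenvalues‖ := by
  set L := (Multiset.map hM.eigenvalues Finset.univ.val).sort (· ≤ ·)
  have hmem : ∀ i, hM.eigenvalues i ∈ L := by simp [L]
  rcases isEmpty_or_nonempty n with _ | ⟨⟨i₀⟩⟩
  · simp [eigval, Subsingleton.elim hM.eigenvalues 0]
  have hL : L ≠ [] := List.ne_nil_of_mem (hmem i₀)
  have hlen : L.length = Fintype.card n := by simp [L]
  rw [eigval, ← hlen, L.getD_length_sub_one_eq_getLast hL]
  apply le_antisymm
  · obtain ⟨i, -, hi⟩ := Multiset.mem_map.1 ((Multiset.mem_sort _).1 (L.getLast_mem hL))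
    exact hi ▸ (Real.le_norm_self _).trans (norm_le_pi_norm _ i)
  · have hmax : ∀ i, hM.eigenvalues i ≤ L.getLast hL := fun i =>
      (Multiset.pairwise_sort _ _).rel_getLast (hmem i)
    refine (pi_norm_le_iff_of_nonneg ((hnonneg i₀).trans (hmax i₀))).2 fun i => ?_
    rw [Real.norm_of_nonneg (hnonneg i)]
    exact hmax i

theorem singval_nonneg {m n : Type} [Fintype m] [Fintype n] [DecidableEq n]
    (M : Matrix m n ℂ) (j : ℕ) : 0 ≤ singval M j :=
  Real.sqrt_nonneg _

section L2OpNorm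

open scoped Matrix.Norms.L2Operator

theorem Matrix.IsHermitian.l2_opNorm_eq_norm_eigenvalues {𝕜 n : Type*} [RCLike 𝕜] [Fintype n]
    [DecidableEq n] {A : Matrix n n 𝕜} (hA : A.IsHermitian) : ‖A‖ = ‖hA.eigenvalues‖ := by
  conv_lhs => rw [hA.spectral_theorem]
  rw [Unitary.conjStarAlgAut_apply,
    CStarRing.norm_mul_mem_unitary _ (Unitary.star_mem (Subtype.prop _)),
    CStarRing.norm_coe_unitary_mul, l2_opNorm_diagonal]
  simp [Pi.norm_def]

theorem singval_one_eq_l2_opNorm {m n : Type} [Fintype m] [Fintype n] [DecidableEq n]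
    (M : Matrix m n ℂ) : singval M 1 = ‖M‖ := by
  rw [singval, eigval_one_eq_norm_eigenvalues _ M.eigenvalues_conjTranspose_mul_self_nonneg,
    ← Matrix.IsHermitian.l2_opNorm_eq_norm_eigenvalues, l2_opNorm_conjTranspose_mul_self,
    Real.sqrt_mul_self (norm_nonneg M)]

theorem singval_one_conjTranspose {m n : Type} [Fintype m] [Fintype n] [DecidableEq m]
    [DecidableEq n] (M : Matrix m n ℂ) : singval Mᴴ 1 = singval M 1 := by
  rw [singval_one_eq_l2_opNorm, singval_one_eq_l2_opNorm, l2_opNorm_conjTranspose]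

theorem singval_one_diagonal_inv_le {k : Type} [Fintype k] [DecidableEq k] {d : k → ℝ} {s : ℝ}
    (hs : 0 < s) (hd : ∀ t, s ≤ d t) :
    singval (Matrix.diagonal fun t => (d t : ℂ)⁻¹) 1 ≤ s⁻¹ := by
  rw [singval_one_eq_l2_opNorm, l2_opNorm_diagonal]
  refine (pi_norm_le_iff_of_nonneg (inv_nonneg.2 hs.le)).2 fun t => ?_
  rw [norm_inv, Complex.norm_real, Real.norm_of_nonneg (hs.le.trans (hd t))]
  exact inv_anti₀ hs (hd t)

end L2OpNorm

theorem UINorm.le_div_mul_of_conjTranspose_mul_eq_diagonal_mul (nrm : UINorm)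
    {p q k : Type} [Fintype p] [Fintype q] [Fintype k] [DecidableEq p] [DecidableEq q]
    [DecidableEq k] {U : Matrix p k ℂ} {V : Matrix q k ℂ} {E : Matrix p q ℂ} {d : k → ℝ} {s : ℝ}
    (hs : 0 < s) (hd : ∀ t, s ≤ d t)
    (h : Uᴴ * E = Matrix.diagonal (fun t => (d t : ℂ)) * Vᴴ) :
    nrm.N V ≤ singval E 1 / s * nrm.N U := by
  have hd0 : ∀ t, (d t : ℂ) ≠ 0 := fun t => by exact_mod_cast (hs.trans_le (hd t)).ne'
  have hV : V = Eᴴ * (U * Matrix.diagonal fun t => (d t : ℂ)⁻¹) := by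
    have h' : Eᴴ * U = V * Matrix.diagonal (fun t => (d t : ℂ)) := by
      simpa [Matrix.conjTranspose_mul, Matrix.diagonal_conjTranspose, Pi.star_def]
        using congrArg (·ᴴ) h
    rw [← Matrix.mul_assoc, h', Matrix.mul_assoc, Matrix.diagonal_mul_diagonal]
    simp [hd0]
  calc nrm.N V ≤ singval Eᴴ 1 * nrm.N (U * Matrix.diagonal fun t => (d t : ℂ)⁻¹) :=
        hV ▸ nrm.spec_mul _ _
    _ ≤ singval E 1 * (nrm.N U * s⁻¹) := by
        rw [singval_one_conjTranspose]
        gcongr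
        · exact singval_nonneg E 1
        · exact (nrm.mul_spec _ _).trans
            (mul_le_mul_of_nonneg_left (singval_one_diagonal_inv_le hs hd) (nrm.nonneg U))
    _ = singval E 1 / s * nrm.N U := by ring

theorem div_mul_div_sq_sub_sq_div {σ : ℝ} (hσ : σ ≠ 0) (ε z : ℝ) :
    ε / σ * (z / ((σ ^ 2 - ε ^ 2) / σ)) = z / ((σ ^ 2 - ε ^ 2) / ε) := by
  rw [div_div_eq_mul_div, div_div_eq_mul_div]
  field_simp

theorem right_angle_from_left_angle_general
    {k p nl : ℕ}
    (σ : ℕ → ℝ) (hσdec : ∀ i j : ℕ, 1 ≤ i → i ≤ j → σ j ≤ σ i) (hσk : 0 < σ k)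
    (U31 : Matrix (Fin p) (Fin k) ℂ) (V31 : Matrix (Fin nl) (Fin k) ℂ)
    (E33 : Matrix (Fin p) (Fin nl) ℂ)
    (hrel : U31ᴴ * E33 = (Matrix.diagonal fun t : Fin k => (σ ((t : ℕ) + 1) : ℂ)) * V31ᴴ) :
    ∀ nrm : UINorm,
      nrm.N V31 ≤ (singval E33 1 / σ k) * nrm.N U31 ∧
      ∀ (lk : ℕ) (E31 : Matrix (Fin p) (Fin k) ℂ) (E32 : Matrix (Fin p) (Fin lk) ℂ),
        nrm.N U31 ≤ nrm.N (Matrix.fromCols E31 E32)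
            / ((σ k ^ 2 - singval E33 1 ^ 2) / σ k) →
        nrm.N V31 ≤ nrm.N (Matrix.fromCols E31 E32)
            / ((σ k ^ 2 - singval E33 1 ^ 2) / singval E33 1) := by
  intro nrm
  have hσ : ∀ t : Fin k, σ k ≤ σ ((t : ℕ) + 1) := fun t =>
    hσdec _ _ (Nat.le_add_left 1 _) t.isLt
  have hV := nrm.le_div_mul_of_conjTranspose_mul_eq_diagonal_mul hσk hσ hrel
  refine ⟨hV, fun lk E31 E32 hU => ?_⟩
  calc nrm.N V31 ≤ singval E33 1 / σ k * nrm.N U31 := hV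
    _ ≤ singval E33 1 / σ k * (nrm.N (Matrix.fromCols E31 E32)
          / ((σ k ^ 2 - singval E33 1 ^ 2) / σ k)) :=
        mul_le_mul_of_nonneg_left hU (div_nonneg (singval_nonneg E33 1) hσk.le)
    _ = _ := div_mul_div_sq_sub_sq_div hσk.ne' _ _

/-- If Ũ₃₁* E₃₃ = Σ_k Ṽ₃₁* with ‖E₃₃‖₂ < σ_k, then every unitarily invariant norm
satisfies ⦀Ṽ₃₁⦀ ≤ (‖E₃₃‖₂/σ_k)·⦀Ũ₃₁⦀; consequently, if ⦀Ũ₃₁⦀ ≤ ⦀[E₃₁,E₃₂]⦀/Γ₁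
then ⦀Ṽ₃₁⦀ ≤ ⦀[E₃₁,E₃₂]⦀/Γ₂. -/
theorem right_angle_from_left_angle
    {k p nl : ℕ}
    (σ : ℕ → ℝ) (hσdec : ∀ i j : ℕ, 1 ≤ i → i ≤ j → σ j ≤ σ i) (hσk : 0 < σ k)
    (U31 : Matrix (Fin p) (Fin k) ℂ) (V31 : Matrix (Fin nl) (Fin k) ℂ)
    (E33 : Matrix (Fin p) (Fin nl) ℂ)
    (hE33 : singval E33 1 < σ k)
    (hrel : U31ᴴ * E33 = (Matrix.diagonal fun t : Fin k => (σ ((t : ℕ) + 1) : ℂ)) * V31ᴴ) :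
    ∀ nrm : UINorm,
      nrm.N V31 ≤ (singval E33 1 / σ k) * nrm.N U31 ∧
      ∀ (lk : ℕ) (E31 : Matrix (Fin p) (Fin k) ℂ) (E32 : Matrix (Fin p) (Fin lk) ℂ),
        nrm.N U31 ≤ nrm.N (Matrix.fromCols E31 E32)
            / ((σ k ^ 2 - singval E33 1 ^ 2) / σ k) →
        nrm.N V31 ≤ nrm.N (Matrix.fromCols E31 E32)
            / ((σ k ^ 2 - singval E33 1 ^ 2) / singval E33 1) :=
  right_angle_from_left_angle_general σ hσdec hσk U31 V31 E33 hrel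
end
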